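/- arXiv:2009.13285 — 7 statements merged into one kernel-verified Lean document; each statement's English description precedes it below -/
import Mathlib

section
/- Let p ≥ 1 be an integer and let e_p be a primitive p-th root of unity in ℂ. Then for all natural numbers a, b and all natural numbers n, k with 0 ≤ n ≤ p−1 and 0 ≤ k ≤ p−1, the evaluated Gaussian binomial coefficients satisfy [n + a·p choose k + b·p]_{e_p} = [n choose k]_{e_p} · C(a,b), where C(a,b) is the ordinary binomial coefficient (equal to 0 if b > a). -/
/-- Evaluation at `ζ : ℂ` of the Gaussian binomial coefficient `[n choose k]_q ∈ ℤ[q]`,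
defined by the `q`-Pascal recursion `[n+1, k+1]_q = [n, k]_q + q^(k+1) [n, k+1]_q`,
which agrees with `∏_{i=1}^{k} (1−q^{n−k+i})/(1−q^i)` for `k ≤ n` and is `0` for `k > n`. -/
def qbinom : ℕ → ℕ → ℂ → ℂ
  | _, 0, _ => 1
  | 0, _ + 1, _ => 0
  | n + 1, k + 1, ζ => qbinom n k ζ + ζ ^ (k + 1) * qbinom n (k + 1) ζ

lemma qbinom_zero_right (n : ℕ) (ζ : ℂ) : qbinom n 0 ζ = 1 := by
  cases n <;> rfl

lemma qbinom_succ_succ (n k : ℕ) (ζ : ℂ) :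
    qbinom (n + 1) (k + 1) ζ = qbinom n k ζ + ζ ^ (k + 1) * qbinom n (k + 1) ζ := rfl

lemma qbinom_eq_zero (ζ : ℂ) : ∀ n k, n < k → qbinom n k ζ = 0 := by
  intro n
  induction n with
  | zero =>
    intro k hk
    match k, hk with
    | k + 1, _ => rfl
  | succ n ih =>
    intro k hk
    match k, hk with
    | k + 1, hk =>
      rw [qbinom_succ_succ, ih k (by omega), ih (k + 1) (by omega)]
      ring

lemma qbinom_diag (ζ : ℂ) : ∀ n, qbinom n n ζ = 1 := by
  intro n
  induction n with
  | zero => rfl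
  | succ n ih =>
    rw [qbinom_succ_succ, ih, qbinom_eq_zero ζ n (n + 1) (by omega)]
    ring

/-- The other `q`-Pascal recursion. -/
lemma qbinom_pascal' (ζ : ℂ) : ∀ n k,
    qbinom (n + 1) (k + 1) ζ = ζ ^ (n - k) * qbinom n k ζ + qbinom n (k + 1) ζ := by
  intro n
  induction n with
  | zero =>
    intro k
    cases k with
    | zero => simp [qbinom]
    | succ k => simp [qbinom, qbinom_eq_zero ζ 0 (k + 1) (by omega)]
  | succ n ih =>
    intro k
    cases k with
    | zero =>
      have h1 : qbinom (n + 1) 1 ζ = ζ ^ n + qbinom n 1 ζ := by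
        have := ih 0
        simpa [qbinom_zero_right] using this
      have h2 : qbinom (n + 2) 1 ζ = 1 + ζ * qbinom (n + 1) 1 ζ := by
        rw [qbinom_succ_succ, qbinom_zero_right]; ring
      have h3 : qbinom (n + 1) 1 ζ = 1 + ζ * qbinom n 1 ζ := by
        rw [qbinom_succ_succ, qbinom_zero_right]; ring
      conv_lhs => rw [h2, h1]
      conv_rhs => rw [h3]
      rw [qbinom_zero_right]
      simp only [Nat.sub_zero]
      ring
    | succ k =>
      have hexp : n + 1 - (k + 1) = n - k := by omega
      rw [hexp]
      conv_lhs => rw [qbinom_succ_succ, ih k, ih (k + 1)]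
      conv_rhs => rw [qbinom_succ_succ n k, qbinom_succ_succ n (k + 1)]
      by_cases h : k + 1 ≤ n
      · rw [show n - k = (n - (k + 1)) + 1 by omega]
        ring
      · rw [qbinom_eq_zero ζ n (k + 1) (by omega), qbinom_eq_zero ζ n (k + 2) (by omega)]
        rw [show n - k = 0 by omega, show n - (k + 1) = 0 by omega]
        ring

/-- Step recursion for the row `p - 1` at a primitive `p`-th root of unity. -/
lemma qbinom_row_step (p : ℕ) (hp : 1 ≤ p) (e : ℂ) (he : IsPrimitiveRoot e p)
    (j : ℕ) (hj : j + 1 ≤ p - 1) :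
    e ^ (j + 1) * qbinom (p - 1) (j + 1) e = - qbinom (p - 1) j e := by
  obtain ⟨m, rfl⟩ : ∃ m, p = m + 1 := ⟨p - 1, by omega⟩
  simp only [Nat.add_sub_cancel] at hj ⊢
  have hd : qbinom (m + 1) (j + 1) e = qbinom m j e + e ^ (j + 1) * qbinom m (j + 1) e :=
    qbinom_succ_succ m j e
  have hp' : qbinom (m + 1) (j + 1) e = e ^ (m - j) * qbinom m j e + qbinom m (j + 1) e :=
    qbinom_pascal' e m j
  have hpow : e ^ (j + 1) * e ^ (m - j) = 1 := by
    rw [← pow_add, show j + 1 + (m - j) = m + 1 by omega]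
    exact he.pow_eq_one
  have hne : e ^ (j + 1) ≠ 1 :=
    he.pow_ne_one_of_pos_of_lt (by omega) (by omega)
  have key : (e ^ (j + 1) - 1) * (e ^ (j + 1) * qbinom m (j + 1) e) =
      (e ^ (j + 1) - 1) * (- qbinom m j e) := by
    have := congrArg (fun z => e ^ (j + 1) * z) (hd.symm.trans hp')
    have h2 : e ^ (j + 1) * qbinom m j e + e ^ (j + 1) * (e ^ (j + 1) * qbinom m (j + 1) e)
        = qbinom m j e + e ^ (j + 1) * qbinom m (j + 1) e := by
      calc e ^ (j + 1) * qbinom m j e + e ^ (j + 1) * (e ^ (j + 1) * qbinom m (j + 1) e)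
          = e ^ (j + 1) * (qbinom m j e + e ^ (j + 1) * qbinom m (j + 1) e) := by ring
        _ = e ^ (j + 1) * (e ^ (m - j) * qbinom m j e + qbinom m (j + 1) e) := by
            rw [← hd, hp']
        _ = (e ^ (j + 1) * e ^ (m - j)) * qbinom m j e + e ^ (j + 1) * qbinom m (j + 1) e := by
            ring
        _ = qbinom m j e + e ^ (j + 1) * qbinom m (j + 1) e := by rw [hpow]; ring
    linear_combination h2
  exact mul_left_cancel₀ (sub_ne_zero.mpr hne) key

/-- Interior entries of row `p` vanish at a primitive `p`-th root of unity. -/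
lemma qbinom_p_row (p : ℕ) (hp : 1 ≤ p) (e : ℂ) (he : IsPrimitiveRoot e p)
    (i : ℕ) (hi0 : 0 < i) (hip : i < p) : qbinom p i e = 0 := by
  obtain ⟨j, rfl⟩ : ∃ j, i = j + 1 := ⟨i - 1, by omega⟩
  obtain ⟨m, rfl⟩ : ∃ m, p = m + 1 := ⟨p - 1, by omega⟩
  have hstep := qbinom_row_step (m + 1) (by omega) e he j (by omega)
  simp only [Nat.add_sub_cancel] at hstep
  rw [qbinom_succ_succ, hstep]
  ring

/-- Key periodicity: adding `p` to the top index. -/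
lemma qbinom_add_p (p : ℕ) (hp : 1 ≤ p) (e : ℂ) (he : IsPrimitiveRoot e p) :
    ∀ m j, qbinom (m + p) j e =
      qbinom m j e + if p ≤ j then qbinom m (j - p) e else 0 := by
  intro m
  induction m with
  | zero =>
    intro j
    rw [Nat.zero_add]
    rcases lt_trichotomy j p with h | h | h
    · rcases Nat.eq_zero_or_pos j with rfl | hj0
      · simp [qbinom_zero_right, show ¬ p ≤ 0 by omega]
      · rw [if_neg (by omega), qbinom_p_row p hp e he j hj0 h,
          qbinom_eq_zero e 0 j (by omega)]
        ring
    · subst h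
      rw [if_pos le_rfl, Nat.sub_self, qbinom_diag,
        qbinom_eq_zero e 0 j (by omega), qbinom_zero_right]
      ring
    · rw [if_pos (by omega), qbinom_eq_zero e p j (by omega),
        qbinom_eq_zero e 0 j (by omega), qbinom_eq_zero e 0 (j - p) (by omega)]
      ring
  | succ m ih =>
    intro j
    cases j with
    | zero => simp [qbinom_zero_right, show ¬ p ≤ 0 by omega]
    | succ j =>
      have hL : qbinom (m + 1 + p) (j + 1) e
          = qbinom (m + p) j e + e ^ (j + 1) * qbinom (m + p) (j + 1) e := by
        rw [show m + 1 + p = (m + p) + 1 by omega, qbinom_succ_succ]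
      rw [hL, ih j, ih (j + 1), qbinom_succ_succ]
      rcases lt_trichotomy (j + 1) p with h | h | h
      · rw [if_neg (by omega), if_neg (by omega), if_neg (by omega)]
        ring
      · rw [if_neg (by omega), if_pos (by omega), if_pos (by omega),
          show j + 1 - p = 0 by omega, qbinom_zero_right, qbinom_zero_right,
          show (j + 1 : ℕ) = p from h, he.pow_eq_one]
        ring
      · rw [if_pos (by omega), if_pos (by omega), if_pos (by omega),
          show j + 1 - p = (j - p) + 1 by omega, qbinom_succ_succ]
        have hpow : e ^ (j + 1) = e ^ (j - p + 1) := by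
          rw [show j + 1 = (j - p + 1) + p by omega, pow_add, he.pow_eq_one, mul_one]
        rw [hpow]
        ring

theorem stmt0 (p : ℕ) (hp : 1 ≤ p) (e : ℂ) (he : IsPrimitiveRoot e p)
    (a b n k : ℕ) (hn : n ≤ p - 1) (hk : k ≤ p - 1) :
    qbinom (n + a * p) (k + b * p) e = qbinom n k e * (a.choose b : ℂ) := by
  induction a generalizing b with
  | zero =>
    cases b with
    | zero => simp
    | succ b =>
      have hple : p ≤ (b + 1) * p := Nat.le_mul_of_pos_left p (by omega)
      simp only [Nat.zero_mul, Nat.add_zero]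
      rw [qbinom_eq_zero e n (k + (b + 1) * p) (by omega),
        Nat.choose_eq_zero_of_lt (by omega)]
      simp
  | succ a ih =>
    have h1 : n + (a + 1) * p = (n + a * p) + p := by ring
    rw [h1, qbinom_add_p p hp e he (n + a * p) (k + b * p), ih b]
    cases b with
    | zero =>
      rw [if_neg (by simp only [Nat.zero_mul, Nat.add_zero]; omega)]
      simp
    | succ b =>
      have hple : p ≤ (b + 1) * p := Nat.le_mul_of_pos_left p (by omega)
      have hmul : (b + 1) * p = b * p + p := by ring
      rw [if_pos (by omega), show k + (b + 1) * p - p = k + b * p by omega, ih b]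
      push_cast [Nat.choose_succ_succ a b]
      ring
end

section
/- Let p ≥ 1 be an integer and let e_p be a primitive p-th root of unity in ℂ. Then for all nonzero complex numbers x and y, x^p + x^{−p} − y^p − y^{−p} = ∏_{i=1}^{p} ( x + x^{−1} − y·e_p^i − y^{−1}·e_p^{−i} ). -/
/-!
Both sides factor through the identity `a + a⁻¹ - b - b⁻¹ = (a - b) * (1 - (a * b)⁻¹)`: the
left side becomes `(x ^ p - y ^ p) * (1 - ((x * y) ^ p)⁻¹)` and the factor indexed by the root
of unity `z` becomes `(x - z * y) * (1 - (x * y * z)⁻¹)`. The two resulting products over the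
`p`-th roots of unity are instances of `X ^ p - Y ^ p = ∏ (X - z * Y)`, the second one after
reindexing by `z ↦ z⁻¹`.
-/

open Finset Polynomial

theorem Finset.prod_Icc_one_eq_prod_range_of_apply_eq {M : Type*} [CommMonoid M] {n : ℕ}
    (g : ℕ → M) (h : g n = g 0) : ∏ i ∈ Icc 1 n, g i = ∏ i ∈ range n, g i := by
  rcases Nat.eq_zero_or_pos n with rfl | hn
  · simp
  rw [← Ico_add_one_right_eq_Icc, prod_Ico_succ_top hn, h, range_eq_Ico,
    prod_eq_prod_Ico_succ_bot hn, mul_comm]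

namespace IsPrimitiveRoot

variable {R M : Type*} [CommRing R] [IsDomain R] [CommMonoid M] {ζ : R} {n : ℕ}

theorem prod_range_pow_eq_prod_nthRootsFinset (hζ : IsPrimitiveRoot ζ n) (hn : 0 < n)
    (f : R → M) : ∏ i ∈ range n, f (ζ ^ i) = ∏ z ∈ nthRootsFinset n (1 : R), f z := by
  refine prod_nbij (ζ ^ ·) (fun i _ ↦ ?_) (fun i hi j hj hij ↦ ?_) (fun z hz ↦ ?_) fun _ _ ↦ rfl
  · rw [Polynomial.mem_nthRootsFinset hn, ← pow_mul, mul_comm, pow_mul, hζ.pow_eq_one, one_pow]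
  · exact hζ.pow_inj (mem_range.mp hi) (mem_range.mp hj) hij
  · have : NeZero n := .of_pos hn
    obtain ⟨i, hi, rfl⟩ := hζ.eq_pow_of_pow_eq_one ((Polynomial.mem_nthRootsFinset hn _).mp hz)
    exact ⟨i, mem_range.mpr hi, rfl⟩

theorem prod_Icc_pow_eq_prod_nthRootsFinset (hζ : IsPrimitiveRoot ζ n) (hn : 0 < n)
    (f : R → M) : ∏ i ∈ Icc 1 n, f (ζ ^ i) = ∏ z ∈ nthRootsFinset n (1 : R), f z := by
  rw [prod_Icc_one_eq_prod_range_of_apply_eq _ (by rw [hζ.pow_eq_one, pow_zero]),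
    hζ.prod_range_pow_eq_prod_nthRootsFinset hn]

end IsPrimitiveRoot

theorem Polynomial.prod_nthRootsFinset_inv {K M : Type*} [Field K] [CommMonoid M] (n : ℕ)
    (f : K → M) : ∏ z ∈ nthRootsFinset n (1 : K), f z⁻¹ = ∏ z ∈ nthRootsFinset n (1 : K), f z := by
  rcases Nat.eq_zero_or_pos n with rfl | hn
  · simp
  have inv_mem {z : K} (hz : z ∈ nthRootsFinset n (1 : K)) : z⁻¹ ∈ nthRootsFinset n (1 : K) := by
    rw [mem_nthRootsFinset hn] at hz ⊢
    rw [inv_pow, hz, inv_one]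
  exact prod_nbij' (·⁻¹) (·⁻¹) (fun _ ↦ inv_mem) (fun _ ↦ inv_mem) (fun z _ ↦ inv_inv z)
    (fun z _ ↦ inv_inv z) fun _ _ ↦ rfl

theorem IsPrimitiveRoot.prod_one_sub_mul_inv {K : Type*} [Field K] {ζ : K} {n : ℕ}
    (hζ : IsPrimitiveRoot ζ n) (hn : 0 < n) (w : K) :
    ∏ z ∈ nthRootsFinset n (1 : K), (1 - (w * z)⁻¹) = 1 - (w ^ n)⁻¹ := by
  have h := hζ.pow_sub_pow_eq_prod_sub_mul 1 w⁻¹ hn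
  rw [one_pow, ← prod_nthRootsFinset_inv] at h
  rw [← inv_pow, h]
  simp only [mul_inv, mul_comm]

theorem add_inv_sub_sub_inv_eq_mul {K : Type*} [Field K] {a b : K} (ha : a ≠ 0) (hb : b ≠ 0) :
    a + a⁻¹ - b - b⁻¹ = (a - b) * (1 - (a * b)⁻¹) := by
  field_simp
  ring

theorem stmt1 (p : ℕ) (hp : 1 ≤ p) (e : ℂ) (he : IsPrimitiveRoot e p)
    (x y : ℂ) (hx : x ≠ 0) (hy : y ≠ 0) :
    x ^ p + (x ^ p)⁻¹ - y ^ p - (y ^ p)⁻¹ =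
      ∏ i ∈ Finset.Icc 1 p, (x + x⁻¹ - y * e ^ i - y⁻¹ * (e ^ i)⁻¹) := by
  have factor : ∀ z ∈ nthRootsFinset p (1 : ℂ),
      x + x⁻¹ - y * z - y⁻¹ * z⁻¹ = (x - z * y) * (1 - (x * y * z)⁻¹) := fun z hz ↦ by
    rw [← mul_inv, add_inv_sub_sub_inv_eq_mul hx
      (mul_ne_zero hy (ne_zero_of_mem_nthRootsFinset one_ne_zero hz))]
    ring
  rw [he.prod_Icc_pow_eq_prod_nthRootsFinset hp (fun z ↦ x + x⁻¹ - y * z - y⁻¹ * z⁻¹),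
    prod_congr rfl factor, prod_mul_distrib, ← he.pow_sub_pow_eq_prod_sub_mul x y hp,
    he.prod_one_sub_mul_inv hp, mul_pow,
    add_inv_sub_sub_inv_eq_mul (pow_ne_zero p hx) (pow_ne_zero p hy)]
end

section
/- Let p ≥ 1 be an integer and let e_p be a primitive p-th root of unity in ℂ. Then for every nonzero complex number x, σ_p(x,e_p) = x^p + x^{−p} − 2 = (1 − x^p)(x^{−p} − 1), and for all natural numbers n and k, σ_{n + k·p}(x, e_p) = σ_n(x, e_p) · ( (1 − x^p)(x^{−p} − 1) )^k. -/
/-- `σ_m(x,ζ) = ∏_{i=1}^{m} (x + x⁻¹ − ζ^i − ζ^{−i})`. -/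
noncomputable def sigma' (m : ℕ) (x ζ : ℂ) : ℂ :=
  ∏ i ∈ Finset.Icc 1 m, (x + x⁻¹ - ζ ^ i - (ζ ^ i)⁻¹)

/-!
Each factor splits as `x + x⁻¹ - ζ^i - ζ^{-i} = (x - ζ^i)(x - ζ^{-i}) x⁻¹`. Over a full
period `i = 1, …, p` both `ζ^i` and `ζ^{-i}` run through all `p`-th roots of unity, so
`∏ (x - ζ^i) = x^p - 1` turns `σ_p` into `(x^p - 1)² x^{-p}`. The factors depend on `i` only
modulo `p`, so every further block of `p` consecutive factors contributes another `σ_p`.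
-/

open Finset Polynomial

theorem IsPrimitiveRoot.prod_range_sub_pow {R : Type*} [CommRing R] [IsDomain R]
    {ζ : R} {n : ℕ} (hζ : IsPrimitiveRoot ζ n) (hn : 0 < n) (y : R) :
    ∏ i ∈ range n, (y - ζ ^ i) = y ^ n - 1 := by
  simpa [eval_prod] using (congrArg (eval y) (X_pow_sub_C_eq_prod hζ hn (one_pow n))).symm

theorem add_inv_sub_sub_inv_eq {K : Type*} [Field K] {x z : K} (hx : x ≠ 0) (hz : z ≠ 0) :
    x + x⁻¹ - z - z⁻¹ = (x - z) * (x - z⁻¹) * x⁻¹ := by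
  field_simp
  ring

theorem add_inv_sub_two_eq {K : Type*} [Field K] {y : K} (hy : y ≠ 0) :
    y + y⁻¹ - 2 = (1 - y) * (y⁻¹ - 1) := by
  field_simp
  ring

theorem Finset.prod_Icc_one_eq_prod_range_succ {M : Type*} [CommMonoid M]
    (f : ℕ → M) (n : ℕ) :
    ∏ i ∈ Icc 1 n, f i = ∏ i ∈ range n, f (i + 1) := by
  rw [range_eq_Ico, prod_Ico_add', zero_add, Ico_add_one_right_eq_Icc]

namespace Function.Periodic

variable {M : Type*} [CommMonoid M] {f : ℕ → M} {p : ℕ}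

theorem prod_Icc_one_add (hf : Periodic f p) (m : ℕ) :
    ∏ i ∈ Icc 1 (m + p), f i = (∏ i ∈ Icc 1 m, f i) * ∏ i ∈ Icc 1 p, f i := by
  induction m with
  | zero => simp
  | succ m ih =>
    rw [show m + 1 + p = m + p + 1 by omega, prod_Icc_succ_top (by omega), ih,
      prod_Icc_succ_top (by omega), show m + p + 1 = m + 1 + p by omega, hf, mul_right_comm]

theorem prod_Icc_one_eq_prod_range (hf : Periodic f p) :
    ∏ i ∈ Icc 1 p, f i = ∏ i ∈ range p, f i := by
  cases p with
  | zero => simp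
  | succ q =>
    rw [prod_Icc_succ_top (by omega), prod_range_succ', prod_Icc_one_eq_prod_range_succ,
      ← hf 0, zero_add]

end Function.Periodic

theorem periodic_sigma'_factor {p : ℕ} {ζ : ℂ} (hζ : ζ ^ p = 1) (x : ℂ) :
    Function.Periodic (fun i : ℕ => x + x⁻¹ - ζ ^ i - (ζ ^ i)⁻¹) p := fun i => by
  simp only [pow_add, hζ, mul_one]

theorem sigma'_add_mul {p : ℕ} {ζ : ℂ} (hζ : ζ ^ p = 1) (x : ℂ) (n k : ℕ) :
    sigma' (n + k * p) x ζ = sigma' n x ζ * sigma' p x ζ ^ k := by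
  induction k with
  | zero => simp
  | succ k ih =>
    rw [show n + (k + 1) * p = n + k * p + p by ring, sigma',
      (periodic_sigma'_factor hζ x).prod_Icc_one_add, ← sigma', ← sigma', ih, pow_succ,
      mul_assoc]

theorem IsPrimitiveRoot.sigma'_self {p : ℕ} {e : ℂ} (he : IsPrimitiveRoot e p)
    (hp : 0 < p) {x : ℂ} (hx : x ≠ 0) :
    sigma' p x e = (1 - x ^ p) * ((x ^ p)⁻¹ - 1) := by
  have he0 : e ≠ 0 := he.ne_zero hp.ne'
  rw [sigma', (periodic_sigma'_factor he.pow_eq_one x).prod_Icc_one_eq_prod_range]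
  calc ∏ i ∈ range p, (x + x⁻¹ - e ^ i - (e ^ i)⁻¹)
      = ∏ i ∈ range p, ((x - e ^ i) * (x - e⁻¹ ^ i) * x⁻¹) :=
        prod_congr rfl fun i _ => by
          rw [inv_pow, add_inv_sub_sub_inv_eq hx (pow_ne_zero i he0)]
    _ = (x ^ p - 1) * (x ^ p - 1) * x⁻¹ ^ p := by
        rw [prod_mul_distrib, prod_mul_distrib, he.prod_range_sub_pow hp,
          he.inv.prod_range_sub_pow hp, prod_const, card_range]
    _ = (1 - x ^ p) * ((x ^ p)⁻¹ - 1) := by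
        rw [inv_pow]
        field_simp
        ring

theorem stmt2 (p : ℕ) (hp : 1 ≤ p) (e : ℂ) (he : IsPrimitiveRoot e p)
    (x : ℂ) (hx : x ≠ 0) :
    sigma' p x e = x ^ p + (x ^ p)⁻¹ - 2 ∧
    x ^ p + (x ^ p)⁻¹ - 2 = (1 - x ^ p) * ((x ^ p)⁻¹ - 1) ∧
    ∀ n k : ℕ, sigma' (n + k * p) x e =
      sigma' n x e * ((1 - x ^ p) * ((x ^ p)⁻¹ - 1)) ^ k := by
  have hσ := he.sigma'_self hp hx
  have hsum := add_inv_sub_two_eq (pow_ne_zero p hx)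
  exact ⟨hσ.trans hsum.symm, hsum, fun n k => by rw [sigma'_add_mul he.pow_eq_one, hσ]⟩
end

section
/- Let q ∈ ℂ with q ≠ 0 and q^k ≠ 1 for every integer k ≥ 1. Let (C_n)_{n ≥ 0} be any sequence of complex numbers, and for each integer l ≥ 1 set J(l) := Σ_{n=0}^{l−1} C_n · (q^{1+l};q)_n · (q^{1−l};q)_n (this is the value of the cyclotomic expansion at x = q^l, since (q^{1−l};q)_n = 0 for n ≥ l). Then for every n ≥ 0 the cyclotomic coefficients are recovered by the inversion formula C_n = −q^{n+1} Σ_{l=1}^{n+1} [ (1−q^l)(1−q^{2l}) / ( (q;q)_{n+1−l} · (q;q)_{n+1+l} ) ] · (−1)^l q^{l(l−3)/2} · J(l). -/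
/-- The `q`-Pochhammer symbol `(a;q)_n = ∏_{i=0}^{n−1} (1 − a q^i)`. -/
def qpoch (a q : ℂ) (n : ℕ) : ℂ :=
  ∏ i ∈ Finset.range n, (1 - a * q ^ i)

/-!
Substituting the expansion of `J` and exchanging the sums reduces the formula to the
orthogonality relation
`∑_{l=1}^{n+1} W(n,l) (q^{1+l};q)_m (q^{1-l};q)_m = -q^{-(n+1)} δ_{mn}` for `m ≤ n`, where
`W(n,l)` is the coefficient of `J(l)` in the formula. The terms with `l ≤ m` vanish. Writing `l = m + 1 + k` and reflecting `(q^{1-l};q)_m`, the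
remaining sum is `-q^{-(m+1)}` times the very-well-poised sum
`∑_{k=0}^{M} (-1)^k q^{k(k-1)/2} (1 - a q^{2k}) / ((q;q)_k (q;q)_{M-k} (a q^k;q)_{M+1})`
with `a = q^{2m+2}` and `M = n - m`. This sum is `δ_{M0}`, because `1 - q^M` times its
`k`-th term is a difference of consecutive values of an explicit primitive.
-/

open Finset

section qpoch

variable {a b q : ℂ}

lemma qpoch_succ (n : ℕ) : qpoch a q (n + 1) = qpoch a q n * (1 - a * q ^ n) :=
  prod_range_succ _ _

lemma qpoch_succ' (n : ℕ) : qpoch a q (n + 1) = (1 - a) * qpoch (a * q) q n := by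
  simp only [qpoch, prod_range_succ', pow_zero, mul_one, pow_succ', mul_assoc, mul_comm]

lemma qpoch_add (n m : ℕ) : qpoch a q (n + m) = qpoch a q n * qpoch (a * q ^ n) q m := by
  simp only [qpoch, prod_range_add, pow_add, mul_assoc]

lemma qpoch_ne_zero {n : ℕ} (h : ∀ i < n, a * q ^ i ≠ 1) : qpoch a q n ≠ 0 :=
  prod_ne_zero_iff.mpr fun i hi => sub_ne_zero.mpr (h i (mem_range.mp hi)).symm

lemma qpoch_pow_ne_zero (hq : ∀ k : ℕ, 1 ≤ k → q ^ k ≠ 1) {j : ℕ} (hj : 1 ≤ j) (n : ℕ) :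
    qpoch (q ^ j) q n ≠ 0 :=
  qpoch_ne_zero fun i _ => by rw [← pow_add]; exact hq _ (by omega)

lemma qpoch_self_ne_zero (hq : ∀ k : ℕ, 1 ≤ k → q ^ k ≠ 1) (n : ℕ) : qpoch q q n ≠ 0 := by
  simpa using qpoch_pow_ne_zero hq le_rfl n

lemma qpoch_mul_pow_mul_pow_choose (hq0 : q ≠ 0) {m : ℕ} (hab : a * b * q ^ m = q) :
    qpoch b q m * a ^ m * q ^ m.choose 2 = (-1) ^ m * qpoch a q m := by
  have hpow : a ^ m * q ^ m.choose 2 = ∏ i ∈ range m, a * q ^ (m - 1 - i) := by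
    rw [prod_mul_distrib, prod_const, card_range, prod_pow_eq_pow_sum,
      sum_range_reflect (fun i => i) m, sum_range_id, Nat.choose_two_right]
  have hneg : (-1) ^ m * qpoch a q m = ∏ i ∈ range m, -(1 - a * q ^ (m - 1 - i)) := by
    rw [qpoch, ← prod_range_reflect (fun i => 1 - a * q ^ i) m, prod_neg, card_range]
  rw [mul_assoc, hpow, hneg, qpoch, ← prod_mul_distrib]
  refine prod_congr rfl fun i hi => ?_
  have him := mem_range.mp hi
  have hpair : b * q ^ i * (a * q ^ (m - 1 - i)) = 1 := by
    refine mul_left_cancel₀ hq0 ?_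
    calc q * (b * q ^ i * (a * q ^ (m - 1 - i))) = a * b * q ^ (i + (m - 1 - i) + 1) := by ring
      _ = q * 1 := by rw [show i + (m - 1 - i) + 1 = m by omega, hab, mul_one]
  linear_combination -hpair

lemma qpoch_zpow_one_sub_eq_zero (hq0 : q ≠ 0) {l m : ℕ} (hl : 1 ≤ l) (hlm : l ≤ m) :
    qpoch (q ^ (1 - (l : ℤ))) q m = 0 :=
  prod_eq_zero (mem_range.mpr (show l - 1 < m by omega)) (by
    rw [← zpow_natCast, ← zpow_add₀ hq0, show 1 - (l : ℤ) + ((l - 1 : ℕ) : ℤ) = 0 by omega,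
      zpow_zero, sub_self])

end qpoch

noncomputable section

def wellPoisedTerm (a q : ℂ) (M k : ℕ) : ℂ :=
  (-1) ^ k * q ^ k.choose 2 * (1 - a * q ^ (2 * k)) /
    (qpoch q q k * qpoch q q (M - k) * qpoch (a * q ^ k) q (M + 1))

/-- The factors `1 - q ^ k` and `1 - q ^ (M + 1 - k)` make it vanish at `k = 0` and at
`k = M + 1`. -/
def wellPoisedPrimitive (a q : ℂ) (M k : ℕ) : ℂ :=
  (-1) ^ (k + 1) * q ^ k.choose 2 * (1 - q ^ k) * (1 - q ^ (M + 1 - k)) /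
    (qpoch q q k * qpoch q q (M + 1 - k) * qpoch (a * q ^ k) q M)

/-- At `x = q ^ l` this is `(x q; q)_m (x⁻¹ q; q)_m`. -/
def cyclotomicBasis (q : ℂ) (l m : ℕ) : ℂ :=
  qpoch (q ^ (1 + l)) q m * qpoch (q ^ (1 - (l : ℤ))) q m

def inversionWeight (q : ℂ) (n l : ℕ) : ℂ :=
  (1 - q ^ l) * (1 - q ^ (2 * l)) / (qpoch q q (n + 1 - l) * qpoch q q (n + 1 + l)) *
    (-1) ^ l * q ^ (((l : ℤ) * ((l : ℤ) - 3)) / 2)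

end

section wellPoised

variable {a q : ℂ} (ha : ∀ j : ℕ, a * q ^ j ≠ 1) (hq : ∀ k : ℕ, 1 ≤ k → q ^ k ≠ 1)
include ha hq

lemma one_sub_mul_wellPoisedTerm (k r : ℕ) :
    (1 - q ^ (k + r)) * wellPoisedTerm a q (k + r) k =
      wellPoisedPrimitive a q (k + r) (k + 1) - wellPoisedPrimitive a q (k + r) k := by
  have hP := qpoch_self_ne_zero hq k
  have hR := qpoch_self_ne_zero hq r
  have hZ : qpoch (a * q ^ k) q (k + r + 1) ≠ 0 :=
    qpoch_ne_zero fun i _ => by rw [mul_assoc, ← pow_add]; exact ha _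
  have hZ₁ : qpoch (a * q ^ (k + 1)) q (k + r) =
      qpoch (a * q ^ k) q (k + r + 1) / (1 - a * q ^ k) := by
    rw [qpoch_succ', pow_succ, mul_assoc, mul_div_cancel_left₀ _ (sub_ne_zero.mpr (ha k).symm)]
  have hZ₂ : qpoch (a * q ^ k) q (k + r) =
      qpoch (a * q ^ k) q (k + r + 1) / (1 - a * q ^ k * q ^ (k + r)) := by
    rw [qpoch_succ, mul_div_cancel_right₀ _
      (sub_ne_zero.mpr (by rw [mul_assoc, ← pow_add]; exact (ha _).symm))]
  have hu : 1 - q * q ^ k ≠ 0 := sub_ne_zero.mpr (by rw [← pow_succ']; exact (hq _ (by omega)).symm)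
  have hv : 1 - q * q ^ r ≠ 0 := sub_ne_zero.mpr (by rw [← pow_succ']; exact (hq _ (by omega)).symm)
  have hw : 1 - a * q ^ k ≠ 0 := sub_ne_zero.mpr (ha k).symm
  have hwuv : 1 - a * q ^ k * (q ^ k * q ^ r) ≠ 0 :=
    sub_ne_zero.mpr (by rw [← pow_add, mul_assoc, ← pow_add]; exact (ha _).symm)
  have hchoose : (k + 1).choose 2 = k.choose 2 + k := by
    rw [Nat.choose_succ_succ, Nat.choose_one_right, add_comm]
  simp only [wellPoisedTerm, wellPoisedPrimitive, Nat.add_sub_cancel_left,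
    show k + r + 1 - (k + 1) = r by omega, show k + r + 1 - k = r + 1 by omega,
    qpoch_succ (a := q) (q := q), hchoose, hZ₁, hZ₂]
  rw [pow_add q (k.choose 2), pow_succ' q k, pow_succ' q r, pow_add q k r, two_mul, pow_add q k k,
    pow_succ (-1 : ℂ), pow_succ (-1 : ℂ)]
  generalize qpoch (a * q ^ k) q (k + r + 1) = Z at *
  generalize qpoch q q k = P at *
  generalize qpoch q q r = R at *
  generalize q ^ k = u at *
  generalize q ^ r = v at *
  generalize 1 - q * u = x at *
  generalize 1 - q * v = y at *
  field_simp
  -- `(1 - u v) (1 - u w) = u (1 - v) (1 - w) + (1 - u) (1 - u v w)` with `w = a u`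
  ring

theorem sum_wellPoisedTerm (M : ℕ) :
    ∑ k ∈ range (M + 1), wellPoisedTerm a q M k = if M = 0 then 1 else 0 := by
  rcases M.eq_zero_or_pos with rfl | hM
  · simpa [wellPoisedTerm, qpoch] using div_self (sub_ne_zero.mpr (ha 0).symm)
  rw [if_neg hM.ne']
  have htelescope : (1 - q ^ M) * ∑ k ∈ range (M + 1), wellPoisedTerm a q M k = 0 := by
    rw [mul_sum]
    calc ∑ k ∈ range (M + 1), (1 - q ^ M) * wellPoisedTerm a q M k
        = ∑ k ∈ range (M + 1),
            (wellPoisedPrimitive a q M (k + 1) - wellPoisedPrimitive a q M k) :=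
          sum_congr rfl fun k hk => by
            have h := one_sub_mul_wellPoisedTerm ha hq k (M - k)
            rwa [Nat.add_sub_cancel' (Nat.lt_succ_iff.mp (mem_range.mp hk))] at h
      _ = 0 := by rw [sum_range_sub]; simp [wellPoisedPrimitive]
  exact (mul_eq_zero.mp htelescope).resolve_left (sub_ne_zero.mpr (hq M hM).symm)

end wellPoised

section inversion

variable {q : ℂ} (hq0 : q ≠ 0) (hq : ∀ k : ℕ, 1 ≤ k → q ^ k ≠ 1)

include hq0 in
lemma zpow_ediv_two_mul_pow (m k : ℕ) :
    q ^ ((((m + 1 + k : ℕ) : ℤ) * (((m + 1 + k : ℕ) : ℤ) - 3)) / 2) * q ^ (m + 1) =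
      q ^ k.choose 2 * q ^ m.choose 2 * (q ^ (k + 1)) ^ m := by
  have hchoose (j : ℕ) : (j.choose 2 : ℤ) * 2 = j * (j - 1) := by
    have h := Nat.cast_choose_two ℚ j
    field_simp at h
    exact_mod_cast h
  have hexp : (((m + 1 + k : ℕ) : ℤ) * (((m + 1 + k : ℕ) : ℤ) - 3)) / 2 =
      ((k.choose 2 + m.choose 2 + (k + 1) * m : ℕ) : ℤ) - ((m + 1 : ℕ) : ℤ) := by
    refine Int.ediv_eq_of_eq_mul_left two_ne_zero ?_
    push_cast
    linear_combination -hchoose k - hchoose m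
  rw [hexp, zpow_sub₀ hq0, zpow_natCast, zpow_natCast, div_mul_cancel₀ _ (pow_ne_zero _ hq0),
    pow_add, pow_add, ← pow_mul]

include hq0 hq

lemma inversionWeight_mul_cyclotomicBasis (m M k : ℕ) :
    inversionWeight q (m + M) (m + 1 + k) * cyclotomicBasis q (m + 1 + k) m =
      -(q ^ (m + 1))⁻¹ * wellPoisedTerm (q ^ (2 * m + 2)) q M k := by
  set l := m + 1 + k with hl
  have hlow : m + M + 1 - l = M - k := by omega
  have hhigh : qpoch q q (m + M + 1 + l) =
      qpoch q q (l + m) * qpoch (q ^ (2 * m + 2) * q ^ k) q (M + 1) := by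
    rw [show m + M + 1 + l = l + m + (M + 1) by omega, qpoch_add, ← pow_succ', ← pow_add,
      show l + m + 1 = 2 * m + 2 + k by omega]
  have hmid : qpoch q q (l + m) =
      qpoch q q k * qpoch (q ^ (k + 1)) q m * (1 - q ^ l) * qpoch (q ^ (1 + l)) q m := by
    rw [qpoch_add, show l = k + m + 1 by omega, qpoch_succ, qpoch_add, ← pow_succ', ← pow_succ',
      ← pow_succ', add_comm 1]
  have hreflect : qpoch (q ^ (1 - (l : ℤ))) q m * ((q ^ (k + 1)) ^ m * q ^ m.choose 2) =
      (-1) ^ m * qpoch (q ^ (k + 1)) q m := by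
    rw [← mul_assoc]
    refine qpoch_mul_pow_mul_pow_choose hq0 ?_
    rw [← zpow_natCast, ← zpow_natCast q m, ← zpow_add₀ hq0, ← zpow_add₀ hq0]
    conv_rhs => rw [← zpow_one q]
    congr 1
    omega
  have hsign : (-1 : ℂ) ^ l = -(-1) ^ k / (-1) ^ m := by
    rw [eq_div_iff (pow_ne_zero _ (by norm_num)), ← pow_add, show l + m = 2 * m + k + 1 by omega,
      pow_succ, pow_add, pow_mul, neg_one_sq, one_pow, one_mul, mul_neg_one]
  have h2l : q ^ (2 * l) = q ^ (2 * m + 2) * q ^ (2 * k) := by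
    rw [← pow_add]; congr 1; omega
  simp only [inversionWeight, cyclotomicBasis, wellPoisedTerm]
  rw [hlow, hhigh, hmid, h2l, hsign, eq_div_of_mul_eq (by positivity) hreflect,
    eq_div_of_mul_eq (pow_ne_zero _ hq0) (zpow_ediv_two_mul_pow hq0 m k)]
  have := qpoch_self_ne_zero hq k
  have := qpoch_self_ne_zero hq (M - k)
  have := qpoch_pow_ne_zero hq (show 1 ≤ k + 1 by omega) m
  have := qpoch_pow_ne_zero hq (show 1 ≤ 1 + l by omega) m
  have : qpoch (q ^ (2 * m + 2) * q ^ k) q (M + 1) ≠ 0 := by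
    rw [← pow_add]; exact qpoch_pow_ne_zero hq (by omega) _
  have : 1 - q ^ l ≠ 0 := sub_ne_zero.mpr (hq l (by omega)).symm
  field_simp

theorem sum_inversionWeight_mul_cyclotomicBasis {m n : ℕ} (hmn : m ≤ n) :
    ∑ l ∈ Icc 1 (n + 1), inversionWeight q n l * cyclotomicBasis q l m =
      if m = n then -(q ^ (n + 1))⁻¹ else 0 := by
  obtain ⟨M, rfl⟩ := Nat.exists_eq_add_of_le hmn
  have hvanish : ∀ l ∈ Ico 1 (m + 1), inversionWeight q (m + M) l * cyclotomicBasis q l m = 0 :=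
    fun l hl => by
      obtain ⟨h1, h2⟩ := mem_Ico.mp hl
      rw [cyclotomicBasis, qpoch_zpow_one_sub_eq_zero hq0 h1 (by omega), mul_zero, mul_zero]
  have ha : ∀ j : ℕ, q ^ (2 * m + 2) * q ^ j ≠ 1 := fun j => by
    rw [← pow_add]; exact hq _ (by omega)
  rw [← Ico_add_one_right_eq_Icc, ← sum_Ico_consecutive _ (show 1 ≤ m + 1 by omega)
    (show m + 1 ≤ m + M + 1 + 1 by omega), sum_eq_zero hvanish, zero_add, sum_Ico_eq_sum_range,
    show m + M + 1 + 1 - (m + 1) = M + 1 by omega]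
  simp only [inversionWeight_mul_cyclotomicBasis hq0 hq, ← mul_sum, sum_wellPoisedTerm ha hq]
  by_cases hM : M = 0 <;> simp [hM]

end inversion

theorem stmt3 (q : ℂ) (hq : q ≠ 0) (hq' : ∀ k : ℕ, 1 ≤ k → q ^ k ≠ 1)
    (C : ℕ → ℂ)
    (J : ℕ → ℂ)
    (hJ : ∀ l : ℕ, 1 ≤ l →
      J l = ∑ n ∈ Finset.range l, C n * qpoch (q ^ (1 + l)) q n * qpoch (q ^ (1 - (l : ℤ))) q n)
    (n : ℕ) :
    C n = -q ^ (n + 1) *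
      ∑ l ∈ Finset.Icc 1 (n + 1),
        ((1 - q ^ l) * (1 - q ^ (2 * l)) / (qpoch q q (n + 1 - l) * qpoch q q (n + 1 + l))) *
          (-1) ^ l * q ^ (((l : ℤ) * ((l : ℤ) - 3)) / 2) * J l := by
  have hJ' : ∀ l ∈ Icc 1 (n + 1), J l = ∑ m ∈ range (n + 1), C m * cyclotomicBasis q l m := by
    intro l hl
    obtain ⟨h1, h2⟩ := mem_Icc.mp hl
    rw [hJ l h1]
    refine Eq.trans ?_ (sum_subset (range_subset_range.mpr h2) fun m _ hm => ?_)
    · exact sum_congr rfl fun m _ => by rw [cyclotomicBasis, mul_assoc]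
    · rw [cyclotomicBasis, qpoch_zpow_one_sub_eq_zero hq h1 (by simpa using hm), mul_zero,
        mul_zero]
  calc C n = -q ^ (n + 1) * ∑ m ∈ range (n + 1), C m * if m = n then -(q ^ (n + 1))⁻¹ else 0 := by
        simp only [mul_ite, mul_zero, sum_ite_eq', mem_range, Nat.lt_succ_self, if_true]
        field_simp
    _ = -q ^ (n + 1) * ∑ m ∈ range (n + 1),
          C m * ∑ l ∈ Icc 1 (n + 1), inversionWeight q n l * cyclotomicBasis q l m := by
        congr 1
        exact sum_congr rfl fun m hm => by
          rw [sum_inversionWeight_mul_cyclotomicBasis hq hq' (Nat.lt_succ_iff.mp (mem_range.mp hm))]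
    _ = -q ^ (n + 1) * ∑ l ∈ Icc 1 (n + 1), inversionWeight q n l * J l := by
        congr 1
        simp only [mul_sum]
        rw [sum_comm]
        refine sum_congr rfl fun l hl => ?_
        rw [hJ' l hl, mul_sum]
        exact sum_congr rfl fun m _ => by ring
end

section
/- Let p ≥ 3 be an odd integer, set e_p := exp(2πi/p) and e_p^w := exp(2πi w/p) for w ∈ ℂ. Then for every λ ∈ ℂ: Σ_{n=0}^{p−1} ( e_p^{λ+2n+1} + e_p^{−(λ+2n+1)} − 2 ) · σ_{p−1}( e_p^{λ+2n+1}, e_p ) = p · ( exp(2πiλ) + exp(−2πiλ) − 2 ). -/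
/-!
For a primitive `p`-th root of unity `ζ` and `x ≠ 0`, the factorisation
`x + x⁻¹ - ζ^i - ζ^(-i) = x⁻¹ (x - ζ^i)(x - ζ^(-i))` together with
`(x - 1) ∏_{i=1}^{p-1} (x - ζ^(±i)) = x^p - 1` gives
`(x + x⁻¹ - 2) σ_{p-1}(x, ζ) = x^p + x^(-p) - 2`.
For `x = e_p^(λ+2n+1)` we have `x^p = exp(2πiλ)`, so all `p` summands equal
`exp(2πiλ) + exp(-2πiλ) - 2`.
-/

/-- `e_p := exp(2πi/p)`. -/
noncomputable def ep (p : ℕ) : ℂ :=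
  Complex.exp (2 * Real.pi * Complex.I / p)

/-- `e_p^w := exp(2πi w / p)`. -/
noncomputable def epow (p : ℕ) (w : ℂ) : ℂ :=
  Complex.exp (2 * Real.pi * Complex.I * w / p)

open Finset

namespace IsPrimitiveRoot

variable {K : Type*} [CommRing K] [IsDomain K] {ζ : K}

theorem prod_range_sub_pow_s11 {n : ℕ} [NeZero n] (hζ : IsPrimitiveRoot ζ n) (x : K) :
    ∏ i ∈ range n, (x - ζ ^ i) = x ^ n - 1 := by
  have hn := NeZero.pos n
  rw [← one_pow n, hζ.pow_sub_pow_eq_prod_sub_mul x 1 hn]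
  simp only [mul_one]
  refine prod_nbij (ζ ^ ·) (fun i hi => ?_) (fun i hi j hj hij => ?_) (fun y hy => ?_)
    (fun _ _ => rfl)
  · rw [Polynomial.mem_nthRootsFinset hn, ← pow_mul, mul_comm, pow_mul, hζ.pow_eq_one, one_pow]
  · exact hζ.pow_inj (mem_range.mp hi) (mem_range.mp hj) hij
  · obtain ⟨i, hi, rfl⟩ := hζ.eq_pow_of_pow_eq_one ((Polynomial.mem_nthRootsFinset hn 1).mp hy)
    exact ⟨i, mem_range.mpr hi, rfl⟩

theorem sub_one_mul_prod_Icc_sub_pow {m : ℕ} (hζ : IsPrimitiveRoot ζ (m + 1)) (x : K) :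
    (x - 1) * ∏ i ∈ Icc 1 m, (x - ζ ^ i) = x ^ (m + 1) - 1 := by
  rw [← hζ.prod_range_sub_pow_s11, range_eq_Ico, prod_eq_prod_Ico_succ_bot m.succ_pos,
    ← Ico_add_one_right_eq_Icc, pow_zero]
  rfl

end IsPrimitiveRoot

theorem sigma'_eq_inv_pow_mul_prod (m : ℕ) {x ζ : ℂ} (hx : x ≠ 0) (hζ : ζ ≠ 0) :
    sigma' m x ζ =
      (x ^ m)⁻¹ * ((∏ i ∈ Icc 1 m, (x - ζ ^ i)) * ∏ i ∈ Icc 1 m, (x - (ζ ^ i)⁻¹)) := by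
  have hfactor : ∀ i ∈ Icc 1 m,
      x + x⁻¹ - ζ ^ i - (ζ ^ i)⁻¹ = x⁻¹ * ((x - ζ ^ i) * (x - (ζ ^ i)⁻¹)) := by
    intro i _
    have := pow_ne_zero i hζ
    field_simp
    ring
  rw [sigma', prod_congr rfl hfactor, prod_mul_distrib, prod_const, prod_mul_distrib,
    Nat.card_Icc, Nat.add_sub_cancel, inv_pow]

theorem sub_two_mul_sigma'_of_isPrimitiveRoot {n : ℕ} [NeZero n] {x ζ : ℂ} (hx : x ≠ 0)
    (hζ : IsPrimitiveRoot ζ n) :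
    (x + x⁻¹ - 2) * sigma' (n - 1) x ζ = x ^ n + (x ^ n)⁻¹ - 2 := by
  obtain ⟨m, rfl⟩ := Nat.exists_eq_add_one.mpr (NeZero.pos n)
  have h := hζ.sub_one_mul_prod_Icc_sub_pow x
  have h' := hζ.inv.sub_one_mul_prod_Icc_sub_pow x
  simp only [inv_pow] at h'
  rw [Nat.add_sub_cancel, sigma'_eq_inv_pow_mul_prod m hx (hζ.ne_zero m.succ_ne_zero)]
  set P := ∏ i ∈ Icc 1 m, (x - ζ ^ i)
  set Q := ∏ i ∈ Icc 1 m, (x - (ζ ^ i)⁻¹)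
  calc (x + x⁻¹ - 2) * ((x ^ m)⁻¹ * (P * Q))
      = (x ^ (m + 1))⁻¹ * (((x - 1) * P) * ((x - 1) * Q)) := by field_simp; ring
    _ = x ^ (m + 1) + (x ^ (m + 1))⁻¹ - 2 := by
      rw [h, h']
      field_simp
      ring

theorem epow_neg (p : ℕ) (w : ℂ) : epow p (-w) = (epow p w)⁻¹ := by
  rw [epow, epow, ← Complex.exp_neg, mul_neg, neg_div]

theorem epow_pow {p : ℕ} (hp : p ≠ 0) (w : ℂ) :
    epow p w ^ p = Complex.exp (2 * Real.pi * Complex.I * w) := by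
  rw [epow, ← Complex.exp_nat_mul, mul_div_cancel₀ _ (Nat.cast_ne_zero.mpr hp)]

theorem exp_two_pi_I_mul_add_intCast (w : ℂ) (k : ℤ) :
    Complex.exp (2 * Real.pi * Complex.I * (w + k)) =
      Complex.exp (2 * Real.pi * Complex.I * w) := by
  rw [mul_add, Complex.exp_add, mul_comm _ (k : ℂ), Complex.exp_int_mul_two_pi_mul_I, mul_one]

theorem stmt11_general (p : ℕ) (lam : ℂ) :
    ∑ n ∈ Finset.range p,
        (epow p (lam + 2 * n + 1) + epow p (-(lam + 2 * n + 1)) - 2) *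
          sigma' (p - 1) (epow p (lam + 2 * n + 1)) (ep p) =
      (p : ℂ) * (Complex.exp (2 * Real.pi * Complex.I * lam) +
        Complex.exp (-(2 * Real.pi * Complex.I * lam)) - 2) := by
  obtain rfl | hp := eq_or_ne p 0
  · simp
  have := NeZero.mk hp
  have hζ : IsPrimitiveRoot (ep p) p := Complex.isPrimitiveRoot_exp p hp
  have hterm (n : ℕ) :
      (epow p (lam + 2 * n + 1) + epow p (-(lam + 2 * n + 1)) - 2) *
          sigma' (p - 1) (epow p (lam + 2 * n + 1)) (ep p) =
        Complex.exp (2 * Real.pi * Complex.I * lam) +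
          Complex.exp (-(2 * Real.pi * Complex.I * lam)) - 2 := by
    have hshift : lam + 2 * n + 1 = lam + ((2 * n + 1 : ℤ) : ℂ) := by push_cast; ring
    have hx : epow p (lam + 2 * n + 1) ≠ 0 := Complex.exp_ne_zero _
    rw [epow_neg, sub_two_mul_sigma'_of_isPrimitiveRoot hx hζ, epow_pow hp,
      hshift, exp_two_pi_I_mul_add_intCast, Complex.exp_neg]
  rw [sum_congr rfl fun n _ => hterm n, sum_const, card_range, nsmul_eq_mul]

theorem stmt11 (p : ℕ) (hp : 3 ≤ p) (hodd : Odd p) (lam : ℂ) :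
    ∑ n ∈ Finset.range p,
        (epow p (lam + 2 * n + 1) + epow p (-(lam + 2 * n + 1)) - 2) *
          sigma' (p - 1) (epow p (lam + 2 * n + 1)) (ep p) =
      (p : ℂ) * (Complex.exp (2 * Real.pi * Complex.I * lam) +
        Complex.exp (-(2 * Real.pi * Complex.I * lam)) - 2) :=
  stmt11_general p lam
end

section
/- Let s, t ≥ 2 be coprime integers, set c := st − s − t, and define χ : ℤ → {−1,0,1} by χ(n) = 1 if n ≡ st + (s+t) or n ≡ st − (s+t) modulo 2st, χ(n) = −1 if n ≡ st + (s−t) or n ≡ st − (s−t) modulo 2st, and χ(n) = 0 otherwise. Then: (i) for every natural number n with χ(n) ≠ 0, both (n² − c²)/(4st) and (n − c)/2 are nonnegative integers, and (s−1)(t−1)/2 is a nonnegative integer; (ii) for all complex numbers q, x with 0 < |q| < 1, x ≠ 1 and x q² ≠ 1, the series F(x) := ( (q x)^{(s−1)(t−1)/2} / (1 − x) ) · Σ_{n ≥ 0} χ(n) q^{(n² − c²)/(4st)} x^{(n−c)/2} converges absolutely and satisfies the functional equation F(x) = ( (q x)^{(s−1)(t−1)/2} / (1 − x) ) · ( 1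 − q^{s−1} x^{s} − q^{t−1} x^{t} + q^{s+t} x^{s+t} ) + ( (1 − x q²)/(1 − x) ) · q^{st−1} x^{st} · F(x q²). -/
/-- `χ_{s,t}(n)`: equals `1` if `n ≡ st ± (s+t) (mod 2st)`, `−1` if `n ≡ st ± (s−t) (mod 2st)`,
and `0` otherwise.  (Here `st − (s+t)`, `st + (s−t) = st + s − t` and
`st − (s−t) = st + t − s` are written with natural subtraction, which agrees with the
integer value since `s, t ≥ 2`.) -/
def chi (s t n : ℕ) : ℤ :=
  if n % (2 * s * t) = (s * t + s + t) % (2 * s * t) ∨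
      n % (2 * s * t) = (s * t - s - t) % (2 * s * t) then 1
  else if n % (2 * s * t) = (s * t + s - t) % (2 * s * t) ∨
      n % (2 * s * t) = (s * t + t - s) % (2 * s * t) then -1
  else 0

/-- The `n`-th term `χ_{s,t}(n) q^{(n²−c²)/(4st)} x^{(n−c)/2}` with `c = st − s − t`;
the natural-number subtractions and divisions agree with the true exponents whenever
`χ_{s,t}(n) ≠ 0`, and otherwise the term vanishes. -/
noncomputable def torusTerm (s t : ℕ) (q x : ℂ) (n : ℕ) : ℂ :=
  (chi s t n : ℂ) * q ^ ((n ^ 2 - (s * t - s - t) ^ 2) / (4 * s * t)) *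
    x ^ ((n - (s * t - s - t)) / 2)

/-- `F(x) = ((qx)^{(s−1)(t−1)/2} / (1−x)) Σ_{n ≥ 0} χ_{s,t}(n) q^{(n²−c²)/(4st)} x^{(n−c)/2}`. -/
noncomputable def torusF (s t : ℕ) (q x : ℂ) : ℂ :=
  ((q * x) ^ ((s - 1) * (t - 1) / 2) / (1 - x)) * ∑' n : ℕ, torusTerm s t q x n

/-!
Write `c = st − s − t`. The residues `st ± (s+t)`, `st ± (s−t)` modulo `2st` are `c + 2e` with
`e ∈ {0, s, t, s+t}`, so `χ(n) ≠ 0` forces `n = c + 2m` with `m ≡ e (mod st)`; then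
`n² − c² = 4m(m+c)` and `st ∣ m(m+c)`, and the `n`-th term is `χ(n) q^{m(m+c)/st} x^m`.
Replacing `m` by `m + st` multiplies this by `q^{2m+st+c} x^{st}`, and since `c + 1 = (s−1)(t−1)`
the tail of the series after one period is `q^{st−1} x^{st} q^{(s−1)(t−1)}` times the series at
`xq²`, while the first period contributes `1 − q^{s−1}x^s − q^{t−1}x^t + q^{s+t}x^{s+t}`.
Absolute convergence holds because the exponent of `q` grows quadratically in `n`.
-/

lemma summable_pow_div_mul_pow {r M : ℝ} (hr0 : 0 ≤ r) (hr1 : r < 1) (hM : 0 ≤ M) {a : ℕ}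
    (ha : 0 < a) (b : ℕ) : Summable fun n : ℕ => r ^ ((n ^ 2 - b) / a) * M ^ n := by
  obtain ⟨K, hK⟩ : ∃ K : ℕ, r ^ K < 1 / (2 * (M + 1)) :=
    exists_pow_lt_of_lt_one (by positivity) hr1
  have hKM : r ^ K * M ≤ 1 / 2 := by
    have : r ^ K * (2 * (M + 1)) < 1 := by rwa [lt_div_iff₀ (by positivity)] at hK
    nlinarith [pow_nonneg hr0 K]
  refine Summable.of_norm_bounded_eventually_nat summable_geometric_two ?_
  filter_upwards [Filter.eventually_ge_atTop (a * K + b + 1)] with n hn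
  have hexp : K * n ≤ (n ^ 2 - b) / a := by
    have hsq : (a * K + b + 1) * n ≤ n ^ 2 := sq n ▸ Nat.mul_le_mul_right n hn
    have hb : b + 1 ≤ (a * K + b + 1) * n :=
      (Nat.le_mul_of_pos_right _ (by omega)).trans' (by omega)
    rw [Nat.le_div_iff_mul_le ha, Nat.le_sub_iff_add_le (by omega)]
    nlinarith
  calc ‖r ^ ((n ^ 2 - b) / a) * M ^ n‖ = r ^ ((n ^ 2 - b) / a) * M ^ n := by
        rw [Real.norm_of_nonneg (by positivity)]
    _ ≤ r ^ (K * n) * M ^ n :=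
        mul_le_mul_of_nonneg_right (pow_le_pow_of_le_one hr0 hr1.le hexp) (by positivity)
    _ = (r ^ K * M) ^ n := by rw [mul_pow, pow_mul]
    _ ≤ (1 / 2) ^ n := by gcongr

namespace TorusKnot

variable {s t : ℕ}

lemma ne_of_coprime (hs : 2 ≤ s) (hco : Nat.Coprime s t) : s ≠ t := by
  rintro rfl
  have := (Nat.coprime_self s).mp hco
  omega

lemma add_lt_mul (hs : 2 ≤ s) (ht : 2 ≤ t) (hne : s ≠ t) : s + t < s * t := by
  rcases Nat.lt_or_gt_of_ne hne with h | h <;> nlinarith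

lemma two_dvd_pred_mul_pred (hco : Nat.Coprime s t) : 2 ∣ (s - 1) * (t - 1) := by
  have hodd : ¬ (2 ∣ s ∧ 2 ∣ t) := fun ⟨h2s, h2t⟩ =>
    absurd (Nat.eq_one_of_dvd_one (hco ▸ Nat.dvd_gcd h2s h2t)) (by norm_num)
  by_cases h2s : 2 ∣ s
  · exact Dvd.dvd.mul_left (by omega) _
  · exact Dvd.dvd.mul_right (by omega) _

lemma pos_of_add_lt_mul (h : s + t < s * t) : 0 < s ∧ 0 < t := by
  constructor <;> (apply Nat.pos_of_ne_zero; rintro rfl; simp at h)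

lemma residues_mod_two_mul (h : s + t < s * t) :
    (s * t + s + t) % (2 * s * t) = s * t - s - t + 2 * (s + t) ∧
    (s * t - s - t) % (2 * s * t) = s * t - s - t ∧
    (s * t + s - t) % (2 * s * t) = s * t - s - t + 2 * s ∧
    (s * t + t - s) % (2 * s * t) = s * t - s - t + 2 * t := by
  have hm : 2 * s * t = 2 * (s * t) := by ring
  refine ⟨?_, ?_, ?_, ?_⟩ <;> rw [Nat.mod_eq_of_lt (by omega)] <;> omega

lemma chi_of_lt (h : s + t < s * t) {n : ℕ} (hn : n < 2 * s * t) :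
    chi s t n = if n = s * t - s - t + 2 * (s + t) ∨ n = s * t - s - t then 1
      else if n = s * t - s - t + 2 * s ∨ n = s * t - s - t + 2 * t then -1 else 0 := by
  obtain ⟨h1, h2, h3, h4⟩ := residues_mod_two_mul h
  rw [chi, h1, h2, h3, h4, Nat.mod_eq_of_lt hn]

lemma chi_add_period (n : ℕ) : chi s t (n + 2 * s * t) = chi s t n := by
  simp only [chi, Nat.add_mod_right]

lemma exists_of_chi_ne_zero (h : s + t < s * t) {n : ℕ} (hn : chi s t n ≠ 0) :
    ∃ k e, (e = 0 ∨ e = s ∨ e = t ∨ e = s + t) ∧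
      n = s * t - s - t + 2 * (s * t * k + e) := by
  have hdiv := Nat.div_add_mod n (2 * s * t)
  have hk : 2 * s * t * (n / (2 * s * t)) = 2 * (s * t * (n / (2 * s * t))) := by ring
  obtain ⟨h1, h2, h3, h4⟩ := residues_mod_two_mul h
  refine ⟨n / (2 * s * t), ?_⟩
  unfold chi at hn
  rw [h1, h2, h3, h4] at hn
  split_ifs at hn with hr hr' <;> [skip; skip; exact absurd rfl hn]
  · rcases hr with hr | hr
    · exact ⟨s + t, by omega, by omega⟩
    · exact ⟨0, by omega, by omega⟩
  · rcases hr' with hr | hr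
    · exact ⟨s, by omega, by omega⟩
    · exact ⟨t, by omega, by omega⟩

lemma residue_mul_eq (h : s + t < s * t) :
    s * (s + (s * t - s - t)) = s * t * (s - 1) ∧ t * (t + (s * t - s - t)) = s * t * (t - 1) ∧
    (s + t) * (s + t + (s * t - s - t)) = s * t * (s + t) := by
  obtain ⟨hs, ht⟩ := pos_of_add_lt_mul h
  set c := s * t - s - t
  have hc : (c : ℤ) + s + t = s * t := by omega
  refine ⟨?_, ?_, ?_⟩ <;> zify [hs, ht]
  · linear_combination s * hc
  · linear_combination t * hc
  · linear_combination (s + t) * hc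

lemma dvd_residue_mul (h : s + t < s * t) {e : ℕ} (he : e = 0 ∨ e = s ∨ e = t ∨ e = s + t)
    (k : ℕ) : s * t ∣ (s * t * k + e) * (s * t * k + e + (s * t - s - t)) := by
  obtain ⟨hs, ht, hst⟩ := residue_mul_eq h
  set c := s * t - s - t
  have he : s * t ∣ e * (e + c) := by
    rcases he with he | he | he | he <;> rw [he]
    exacts [by simp, hs ▸ dvd_mul_right _ _, ht ▸ dvd_mul_right _ _, hst ▸ dvd_mul_right _ _]
  rw [show (s * t * k + e) * (s * t * k + e + c) = s * t * (k * (s * t * k + 2 * e + c)) +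
    e * (e + c) by ring]
  exact dvd_add (dvd_mul_right _ _) he

lemma exponents_of_chi_ne_zero (h : s + t < s * t) {n : ℕ} (hn : chi s t n ≠ 0) :
    (∃ A : ℕ, (n : ℤ) ^ 2 - ((s : ℤ) * t - s - t) ^ 2 = 4 * s * t * A) ∧
      ∃ B : ℕ, (n : ℤ) - ((s : ℤ) * t - s - t) = 2 * B := by
  obtain ⟨k, e, he, rfl⟩ := exists_of_chi_ne_zero h hn
  obtain ⟨A, hA⟩ := dvd_residue_mul h he k
  have hc : ((s * t - s - t : ℕ) : ℤ) = s * t - s - t := by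
    rw [Nat.sub_sub, Nat.cast_sub h.le]
    push_cast
    ring
  generalize s * t * k + e = m at hA
  refine ⟨⟨A, ?_⟩, ⟨m, ?_⟩⟩ <;> push_cast <;> rw [← hc]
  · have hA : (m : ℤ) * (m + (s * t - s - t : ℕ)) = s * t * A := by exact_mod_cast hA
    linear_combination 4 * hA
  · ring

lemma torusTerm_add_two_mul (q x : ℂ) (m : ℕ) :
    torusTerm s t q x (s * t - s - t + 2 * m) =
      chi s t (s * t - s - t + 2 * m) * q ^ (m * (m + (s * t - s - t)) / (s * t)) * x ^ m := by
  set c := s * t - s - t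
  have hq : (c + 2 * m) ^ 2 - c ^ 2 = 4 * (m * (m + c)) := by
    rw [show (c + 2 * m) ^ 2 = c ^ 2 + 4 * (m * (m + c)) by ring, Nat.add_sub_cancel_left]
  rw [torusTerm, hq, mul_assoc 4 s t, Nat.mul_div_mul_left _ _ (by norm_num),
    Nat.add_sub_cancel_left, Nat.mul_div_cancel_left _ (by norm_num)]

lemma torusTerm_add_period (h : s + t < s * t) {d : ℕ} (hd : (s - 1) * (t - 1) = 2 * d)
    (q x : ℂ) (n : ℕ) :
    torusTerm s t q x (n + 2 * s * t) =
      q ^ (s * t - 1) * x ^ (s * t) * q ^ (2 * d) * torusTerm s t q (x * q ^ 2) n := by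
  by_cases hn : chi s t n = 0
  · simp [torusTerm, chi_add_period, hn]
  obtain ⟨k, e, -, rfl⟩ := exists_of_chi_ne_zero h hn
  generalize s * t * k + e = m
  have hcd : s * t - s - t + 1 = 2 * d := by
    have := pos_of_add_lt_mul h
    rw [← hd, Nat.sub_one_mul, Nat.mul_sub_one]
    omega
  set c := s * t - s - t
  have hst : 0 < s * t := by omega
  have hq : (m + s * t) * (m + s * t + c) / (s * t) =
      m * (m + c) / (s * t) + (2 * m + s * t + c) := by
    rw [show (m + s * t) * (m + s * t + c) = m * (m + c) + s * t * (2 * m + s * t + c) by ring,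
      Nat.add_mul_div_left _ _ hst]
  rw [show c + 2 * m + 2 * s * t = c + 2 * (m + s * t) by ring, torusTerm_add_two_mul,
    torusTerm_add_two_mul, ← show c + 2 * m + 2 * s * t = c + 2 * (m + s * t) by ring,
    chi_add_period, hq, show 2 * m + s * t + c = s * t - 1 + 2 * d + 2 * m by omega]
  ring

lemma sum_range_torusTerm (h : s + t < s * t) (hne : s ≠ t) (q x : ℂ) :
    ∑ n ∈ Finset.range (2 * s * t), torusTerm s t q x n =
      1 - q ^ (s - 1) * x ^ s - q ^ (t - 1) * x ^ t + q ^ (s + t) * x ^ (s + t) := by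
  have hm : 2 * s * t = 2 * (s * t) := by ring
  have hpos := pos_of_add_lt_mul h
  obtain ⟨hes, het, hest⟩ := residue_mul_eq h
  let residues : Finset ℕ := {s * t - s - t + 2 * 0, s * t - s - t + 2 * s,
    s * t - s - t + 2 * t, s * t - s - t + 2 * (s + t)}
  have hsub : residues ⊆ Finset.range (2 * s * t) := by
    intro n hn
    simp only [residues, Finset.mem_insert, Finset.mem_singleton] at hn
    rw [Finset.mem_range]
    omega
  have hzero : ∀ n ∈ Finset.range (2 * s * t), n ∉ residues → torusTerm s t q x n = 0 := by
    intro n hn hnot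
    simp only [residues, Finset.mem_insert, Finset.mem_singleton] at hnot
    rw [torusTerm, chi_of_lt h (Finset.mem_range.mp hn), if_neg (by omega), if_neg (by omega)]
    simp
  rw [← Finset.sum_subset hsub hzero,
    Finset.sum_insert (by simp only [Finset.mem_insert, Finset.mem_singleton]; omega),
    Finset.sum_insert (by simp only [Finset.mem_insert, Finset.mem_singleton]; omega),
    Finset.sum_insert (by simp only [Finset.mem_singleton]; omega), Finset.sum_singleton]
  simp only [torusTerm_add_two_mul]
  rw [chi_of_lt h (by omega), chi_of_lt h (by omega), chi_of_lt h (by omega),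
    chi_of_lt h (by omega), hes, het, hest, Nat.mul_div_cancel_left _ (by omega),
    Nat.mul_div_cancel_left _ (by omega), Nat.mul_div_cancel_left _ (by omega)]
  split_ifs <;> first | (exfalso; omega) | (simp; ring)

lemma norm_chi_le_one (n : ℕ) : ‖(chi s t n : ℂ)‖ ≤ 1 := by
  unfold chi
  split_ifs <;> simp

lemma summable_norm_torusTerm (hst : 0 < s * t) (q x : ℂ) (hq : ‖q‖ < 1) :
    Summable fun n : ℕ => ‖torusTerm s t q x n‖ := by
  set M := max ‖x‖ 1
  have h4st : 0 < 4 * s * t := by rw [mul_assoc]; exact Nat.mul_pos (by norm_num) hst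
  refine (summable_pow_div_mul_pow (norm_nonneg q) hq (by positivity : (0 : ℝ) ≤ M) h4st
    ((s * t - s - t) ^ 2)).of_nonneg_of_le (fun n => norm_nonneg _) fun n => ?_
  rw [torusTerm, norm_mul, norm_mul, norm_pow, norm_pow]
  calc ‖(chi s t n : ℂ)‖ * ‖q‖ ^ ((n ^ 2 - (s * t - s - t) ^ 2) / (4 * s * t)) *
        ‖x‖ ^ ((n - (s * t - s - t)) / 2)
      ≤ 1 * ‖q‖ ^ ((n ^ 2 - (s * t - s - t) ^ 2) / (4 * s * t)) * M ^ n := by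
        gcongr
        · exact norm_chi_le_one n
        · exact (pow_le_pow_left₀ (norm_nonneg x) (le_max_left _ _) _).trans
            (pow_le_pow_right₀ (le_max_right _ _) (by omega))
    _ = _ := by rw [one_mul]

end TorusKnot

open TorusKnot in
theorem stmt13 (s t : ℕ) (hs : 2 ≤ s) (ht : 2 ≤ t) (hco : Nat.Coprime s t) :
    (∀ n : ℕ, chi s t n ≠ 0 →
      (∃ A : ℕ, (n : ℤ) ^ 2 - ((s : ℤ) * t - s - t) ^ 2 = 4 * s * t * A) ∧
      (∃ B : ℕ, (n : ℤ) - ((s : ℤ) * t - s - t) = 2 * B)) ∧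
    (∃ D : ℕ, ((s : ℤ) - 1) * ((t : ℤ) - 1) = 2 * D) ∧
    (∀ q x : ℂ, 0 < ‖q‖ → ‖q‖ < 1 → x ≠ 1 → x * q ^ 2 ≠ 1 →
      Summable (fun n : ℕ => ‖torusTerm s t q x n‖) ∧
      torusF s t q x =
        ((q * x) ^ ((s - 1) * (t - 1) / 2) / (1 - x)) *
            (1 - q ^ (s - 1) * x ^ s - q ^ (t - 1) * x ^ t + q ^ (s + t) * x ^ (s + t)) +
          ((1 - x * q ^ 2) / (1 - x)) * q ^ (s * t - 1) * x ^ (s * t) *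
            torusF s t q (x * q ^ 2)) := by
  have hne := ne_of_coprime hs hco
  have h := add_lt_mul hs ht hne
  obtain ⟨d, hd⟩ := two_dvd_pred_mul_pred hco
  refine ⟨fun n hn => exponents_of_chi_ne_zero h hn, ⟨d, ?_⟩, fun q x _ hq hx hxq => ?_⟩
  · zify [show 1 ≤ s by omega, show 1 ≤ t by omega] at hd
    exact hd
  have hsum := summable_norm_torusTerm (show 0 < s * t by omega) q x hq
  refine ⟨hsum, ?_⟩
  have hx : 1 - x ≠ 0 := sub_ne_zero.mpr hx.symm
  have hxq : 1 - q ^ 2 * x ≠ 0 := mul_comm x (q ^ 2) ▸ sub_ne_zero.mpr hxq.symm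
  rw [torusF, torusF, ← hsum.of_norm.sum_add_tsum_nat_add (2 * s * t), sum_range_torusTerm h hne,
    tsum_congr (torusTerm_add_period h hd q x), tsum_mul_left, hd,
    Nat.mul_div_cancel_left _ (by norm_num)]
  field_simp
  ring
end

section
/- Define for n ∈ ℕ the Laurent polynomial a_n(q) := (−1)^n q^{n(n+3)/2 − 1} Σ_{k=1}^{n+1} q^{k²} [n+k choose 2k−1]_q (the n-th Habiro cyclotomic coefficient of the mirror of the (2,5)-torus knot). Then for every natural number m, its evaluation at q = −1 satisfies a_{2m}(−1) = (−1)^m ( 1 + Σ_{ℓ=0}^{m−1} C(m+ℓ, 2ℓ) ), where C(·,·) is the ordinary binomial coefficient. -/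
/-- The `n`-th Habiro cyclotomic coefficient of the mirror of the `(2,5)`-torus knot,
`a_n(q) = (−1)^n q^{n(n+3)/2 − 1} Σ_{k=1}^{n+1} q^{k²} [n+k choose 2k−1]_q`,
evaluated at `ζ ≠ 0`. -/
noncomputable def aCoef (n : ℕ) (ζ : ℂ) : ℂ :=
  (-1) ^ n * ζ ^ (((n * (n + 3) / 2 : ℕ) : ℤ) - 1) *
    ∑ k ∈ Finset.Icc 1 (n + 1), ζ ^ (k ^ 2) * qbinom (n + k) (2 * k - 1) ζ

open Finset

theorem qbinom_neg_one (n k : ℕ) :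
    qbinom n k (-1) = if Even n ∧ Odd k then 0 else ((n / 2).choose (k / 2) : ℂ) := by
  have half_odd (a : ℕ) : (2 * a + 1) / 2 = a := by omega
  have half_even (a : ℕ) : (2 * a + 1 + 1) / 2 = a + 1 := by omega
  induction n generalizing k with
  | zero =>
    cases k with
    | zero => simp [qbinom]
    | succ k =>
      obtain ⟨b, rfl | rfl⟩ := Nat.even_or_odd' k <;> simp [qbinom, parity_simps, half_even]
  | succ n ih =>
    cases k with
    | zero => simp [qbinom]
    | succ k =>
      rw [qbinom, ih, ih]
      obtain ⟨a, rfl | rfl⟩ := Nat.even_or_odd' n <;>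
        obtain ⟨b, rfl | rfl⟩ := Nat.even_or_odd' k <;>
        simp [parity_simps, pow_succ, pow_mul, half_odd, half_even, Nat.choose_succ_succ]

theorem sum_Icc_one_eq_sum_odd_of_even_eq_zero {M : Type*} [AddCommMonoid M] (f : ℕ → M)
    (m : ℕ) (hf : ∀ j, f (2 * j + 2) = 0) :
    ∑ k ∈ Icc 1 (2 * m + 1), f k = ∑ j ∈ range (m + 1), f (2 * j + 1) := by
  induction m with
  | zero => simp
  | succ m ih =>
    rw [sum_Icc_succ_top (by omega), mul_add, mul_one, sum_Icc_succ_top (by omega), ih,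
      sum_range_succ _ (m + 1), hf m, add_zero, mul_add, mul_one]

theorem qbinom_neg_one_even_odd (a b : ℕ) : qbinom (2 * a) (2 * b + 1) (-1) = 0 := by
  simp [qbinom_neg_one]

theorem qbinom_neg_one_odd_odd (a b : ℕ) :
    qbinom (2 * a + 1) (2 * b + 1) (-1) = (a.choose b : ℂ) := by
  rw [qbinom_neg_one, if_neg (by simp), show (2 * a + 1) / 2 = a by omega,
    show (2 * b + 1) / 2 = b by omega]

theorem neg_one_zpow_aCoef_exponent_two_mul (m : ℕ) :
    (-1 : ℂ) ^ ((((2 * m) * (2 * m + 3) / 2 : ℕ) : ℤ) - 1) = -(-1) ^ m := by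
  have h : (2 * m) * (2 * m + 3) / 2 = m + 2 * (m * (m + 1)) := by
    rw [mul_assoc, Nat.mul_div_cancel_left _ two_pos]; ring
  rw [h, zpow_sub₀ (by norm_num), zpow_natCast, zpow_one, pow_add, pow_mul]
  simp [div_neg]

theorem stmt16 (m : ℕ) :
    aCoef (2 * m) (-1) =
      (-1) ^ m * (1 + ∑ l ∈ Finset.range m, ((m + l).choose (2 * l) : ℂ)) := by
  have even_term (j : ℕ) :
      (-1 : ℂ) ^ ((2 * j + 2) ^ 2) * qbinom (2 * m + (2 * j + 2)) (2 * (2 * j + 2) - 1) (-1) =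
        0 := by
    rw [show 2 * m + (2 * j + 2) = 2 * (m + j + 1) by ring,
      show 2 * (2 * j + 2) - 1 = 2 * (2 * j + 1) + 1 by omega, qbinom_neg_one_even_odd, mul_zero]
  have odd_term (j : ℕ) :
      (-1 : ℂ) ^ ((2 * j + 1) ^ 2) * qbinom (2 * m + (2 * j + 1)) (2 * (2 * j + 1) - 1) (-1) =
        -((m + j).choose (2 * j) : ℂ) := by
    rw [show 2 * m + (2 * j + 1) = 2 * (m + j) + 1 by ring,
      show 2 * (2 * j + 1) - 1 = 2 * (2 * j) + 1 by omega, qbinom_neg_one_odd_odd,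
      (odd_two_mul_add_one j).pow.neg_one_pow, neg_one_mul]
  unfold aCoef
  rw [neg_one_zpow_aCoef_exponent_two_mul, sum_Icc_one_eq_sum_odd_of_even_eq_zero _ _ even_term]
  simp only [odd_term]
  rw [(even_two_mul m).neg_one_pow, sum_range_succ, two_mul, Nat.choose_self, sum_neg_distrib]
  push_cast
  ring
end
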